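/- Let Λ = {(W_j, Λ_j, w_j)} and Γ = {(V_j, Γ_j, v_j)} be g-fusion Bessel sequences in H with bounds D₁ and D₂ respectively. Then the frame operator S_{ΓΛ} f = Σ_{j∈J} v_j w_j P_{V_j} Γ_j* Λ_j P_{W_j} f is a well-defined bounded operator with ‖S_{ΓΛ}‖ ≤ √(D₁D₂), and its adjoint satisfies S_{ΓΛ}* = S_{ΛΓ}. -/

import Mathlib

open ContinuousLinearMap

noncomputable def proj {E : Type*} [NormedAddCommGroup E] [InnerProductSpace ℂ E]
    (W : Submodule ℂ E) [CompleteSpace W] : E →L[ℂ] E :=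
  W.subtypeL.comp (Submodule.orthogonalProjectionOnto W)

/-!
Write `T j = w j • Λ j ∘ P_{W j}` and `U j = v j • Γ j ∘ P_{V' j}`. The hypotheses say that `T` and
`U` are Bessel families with bounds `D₁` and `D₂`, and since orthogonal projections are
self-adjoint, `S_{ΓΛ} = ∑ (U j)† ∘ T j` and `S_{ΛΓ} = ∑ (T j)† ∘ U j`. Testing a finite sum
`y = ∑ (U j)† (x j)` against itself and applying Cauchy–Schwarz and the Bessel bound at `y` gives
`‖y‖ ≤ √D₂ (∑ ‖x j‖²)^{1/2}`; hence `∑ (U j)† (x j)` converges for every square-summable `x`, in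
particular for `x j = T j f`, with norm at most `√D₂ √D₁ ‖f‖`. The adjoint identity holds term by
term.
-/

open scoped InnerProductSpace

section Bessel

variable {ι E F : Type*} [NormedAddCommGroup E] [InnerProductSpace ℂ E]
  [NormedAddCommGroup F] [InnerProductSpace ℂ F]
  {G : ι → Type*} [∀ j, NormedAddCommGroup (G j)] [∀ j, InnerProductSpace ℂ (G j)]

def IsBessel (T : ∀ j, E →L[ℂ] G j) (D : ℝ) : Prop :=
  ∀ f, Summable (fun j => ‖T j f‖ ^ 2) ∧ ∑' j, ‖T j f‖ ^ 2 ≤ D * ‖f‖ ^ 2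

variable {T : ∀ j, E →L[ℂ] G j} {U : ∀ j, F →L[ℂ] G j} {D D₁ D₂ : ℝ}

lemma IsBessel.sum_le (hT : IsBessel T D) (f : E) (s : Finset ι) :
    ∑ j ∈ s, ‖T j f‖ ^ 2 ≤ D * ‖f‖ ^ 2 :=
  ((hT f).1.sum_le_tsum s fun _ _ => by positivity).trans (hT f).2

lemma isBessel_ofReal_smul_iff {w : ι → ℝ} :
    IsBessel (fun j => (w j : ℂ) • T j) D ↔ ∀ f, Summable (fun j => w j ^ 2 * ‖T j f‖ ^ 2) ∧
      ∑' j, w j ^ 2 * ‖T j f‖ ^ 2 ≤ D * ‖f‖ ^ 2 := by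
  have hnorm : ∀ j f, ‖((w j : ℂ) • T j) f‖ ^ 2 = w j ^ 2 * ‖T j f‖ ^ 2 := fun j f => by
    rw [smul_apply, norm_smul, Complex.norm_real, Real.norm_eq_abs, mul_pow, sq_abs]
  simp only [IsBessel, hnorm]

variable [CompleteSpace F] [∀ j, CompleteSpace (G j)]

lemma IsBessel.norm_sum_adjoint_le (hU : IsBessel U D) (x : ∀ j, G j) (s : Finset ι) :
    ‖∑ j ∈ s, adjoint (U j) (x j)‖ ≤ √D * √(∑ j ∈ s, ‖x j‖ ^ 2) := by
  set y := ∑ j ∈ s, adjoint (U j) (x j)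
  have hy_sq : ‖y‖ * ‖y‖ ≤ √D * √(∑ j ∈ s, ‖x j‖ ^ 2) * ‖y‖ := calc
    ‖y‖ * ‖y‖ = RCLike.re ⟪y, y⟫_ℂ := (inner_self_eq_norm_mul_norm y).symm
    _ = RCLike.re (∑ j ∈ s, ⟪U j y, x j⟫_ℂ) := by
      simp only [y, inner_sum, adjoint_inner_right]
    _ ≤ ∑ j ∈ s, ‖U j y‖ * ‖x j‖ :=
      (RCLike.re_le_norm _).trans <| (norm_sum_le _ _).trans <|
        Finset.sum_le_sum fun j _ => norm_inner_le_norm _ _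
    _ ≤ √(∑ j ∈ s, ‖U j y‖ ^ 2) * √(∑ j ∈ s, ‖x j‖ ^ 2) := Real.sum_mul_le_sqrt_mul_sqrt _ _ _
    _ ≤ √(D * ‖y‖ ^ 2) * √(∑ j ∈ s, ‖x j‖ ^ 2) := by gcongr; exact hU.sum_le y s
    _ = √D * √(∑ j ∈ s, ‖x j‖ ^ 2) * ‖y‖ := by
      rw [Real.sqrt_mul' _ (by positivity), Real.sqrt_sq (norm_nonneg y)]; ring
  rcases (norm_nonneg y).eq_or_lt with hy | hy
  · rw [← hy]; positivity
  · exact le_of_mul_le_mul_right hy_sq hy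

lemma IsBessel.summable_adjoint (hU : IsBessel U D) {x : ∀ j, G j}
    (hx : Summable fun j => ‖x j‖ ^ 2) : Summable fun j => adjoint (U j) (x j) := by
  refine summable_iff_vanishing_norm.mpr fun ε hε => ?_
  set δ := ε / (√D + 1)
  have hδ : 0 < δ := by positivity
  obtain ⟨s, hs⟩ := summable_iff_vanishing_norm.mp hx (δ ^ 2) (by positivity)
  refine ⟨s, fun t ht => ?_⟩
  have htail : √(∑ j ∈ t, ‖x j‖ ^ 2) ≤ δ := by
    have := (Real.le_norm_self _).trans (hs t ht).le
    exact (Real.sqrt_le_sqrt this).trans_eq (Real.sqrt_sq hδ.le)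
  calc ‖∑ j ∈ t, adjoint (U j) (x j)‖ ≤ √D * √(∑ j ∈ t, ‖x j‖ ^ 2) := hU.norm_sum_adjoint_le x t
    _ ≤ √D * δ := by gcongr
    _ < ε := by
      rw [mul_div_assoc', div_lt_iff₀ (by positivity)]; nlinarith [Real.sqrt_nonneg D]

lemma IsBessel.norm_tsum_adjoint_le (hU : IsBessel U D) {x : ∀ j, G j}
    (hx : Summable fun j => ‖x j‖ ^ 2) :
    ‖∑' j, adjoint (U j) (x j)‖ ≤ √D * √(∑' j, ‖x j‖ ^ 2) := by
  refine le_of_tendsto' (hU.summable_adjoint hx).hasSum.norm fun s => ?_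
  refine (hU.norm_sum_adjoint_le x s).trans ?_
  gcongr
  exact hx.sum_le_tsum s fun _ _ => by positivity

lemma IsBessel.exists_hasSum_adjoint_apply (hT : IsBessel T D₁) (hU : IsBessel U D₂) :
    ∃ S : E →L[ℂ] F, (∀ f, HasSum (fun j => adjoint (U j) (T j f)) (S f)) ∧
      ‖S‖ ≤ √D₂ * √D₁ := by
  have hsum (f : E) := hU.summable_adjoint (hT f).1
  let S : E →ₗ[ℂ] F :=
    { toFun f := ∑' j, adjoint (U j) (T j f)
      map_add' f g := by simp only [map_add]; exact (hsum f).tsum_add (hsum g)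
      map_smul' c f := by simp only [map_smul]; exact (hsum f).tsum_const_smul c }
  have hbound (f : E) : ‖S f‖ ≤ √D₂ * √D₁ * ‖f‖ := calc
    ‖S f‖ ≤ √D₂ * √(∑' j, ‖T j f‖ ^ 2) := hU.norm_tsum_adjoint_le (hT f).1
    _ ≤ √D₂ * √(D₁ * ‖f‖ ^ 2) := by gcongr; exact (hT f).2
    _ = √D₂ * √D₁ * ‖f‖ := by
      rw [Real.sqrt_mul' _ (by positivity), Real.sqrt_sq (norm_nonneg f), mul_assoc]
  exact ⟨S.mkContinuous _ hbound, fun f => (hsum f).hasSum,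
    S.mkContinuous_norm_le (by positivity) hbound⟩

lemma adjoint_eq_of_hasSum_adjoint_apply [CompleteSpace E] {S : E →L[ℂ] F} {S' : F →L[ℂ] E}
    (hS : ∀ f, HasSum (fun j => adjoint (U j) (T j f)) (S f))
    (hS' : ∀ g, HasSum (fun j => adjoint (T j) (U j g)) (S' g)) :
    adjoint S = S' := by
  refine ((eq_adjoint_iff S' S).mpr fun g f => ?_).symm
  have hleft : HasSum (fun j => ⟪U j g, T j f⟫_ℂ) ⟪S' g, f⟫_ℂ := by
    simpa only [innerSL_apply_apply, adjoint_inner_right, RCLike.star_def, inner_conj_symm]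
      using ((hS' g).mapL (innerSL ℂ f)).star
  have hright : HasSum (fun j => ⟪U j g, T j f⟫_ℂ) ⟪g, S f⟫_ℂ := by
    simpa only [innerSL_apply_apply, adjoint_inner_right] using (hS f).mapL (innerSL ℂ g)
  exact hleft.unique hright

end Bessel

lemma adjoint_smul_comp_proj_apply_smul_comp_proj {E G : Type*} [NormedAddCommGroup E]
    [InnerProductSpace ℂ E] [CompleteSpace E] [NormedAddCommGroup G] [InnerProductSpace ℂ G]
    [CompleteSpace G] (a b : ℝ) (Γ Λ : E →L[ℂ] G) (V W : Submodule ℂ E) [CompleteSpace V]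
    [CompleteSpace W] (f : E) :
    adjoint ((a : ℂ) • (Γ ∘L proj V)) (((b : ℂ) • (Λ ∘L proj W)) f)
      = (a * b) • proj V (adjoint Γ (Λ (proj W f))) := by
  have hP : adjoint (proj V) = proj V := (isSelfAdjoint_starProjection V).adjoint_eq
  rw [map_smulₛₗ, adjoint_comp, hP, Complex.conj_ofReal, smul_apply, smul_apply, comp_apply,
    comp_apply, map_smul, map_smul, smul_smul, ← Complex.ofReal_mul, Complex.coe_smul]

lemma Real.sqrt_mul_sqrt_le_sqrt_mul (x y : ℝ) : √x * √y ≤ √(x * y) := by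
  rcases le_total 0 y with hy | hy
  · rw [Real.sqrt_mul' x hy]
  · rw [Real.sqrt_eq_zero_of_nonpos hy, mul_zero]
    positivity

theorem stmt9_general {ι E : Type*} [NormedAddCommGroup E] [InnerProductSpace ℂ E] [CompleteSpace E]
    {G : ι → Type*} [∀ j, NormedAddCommGroup (G j)] [∀ j, InnerProductSpace ℂ (G j)]
    [∀ j, CompleteSpace (G j)]
    (W V' : ι → Submodule ℂ E) [∀ j, CompleteSpace (W j)] [∀ j, CompleteSpace (V' j)]
    (w v : ι → ℝ)
    (Λ Γ : ∀ j, E →L[ℂ] G j)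
    (D₁ D₂ : ℝ)
    (hΛ : ∀ f : E, Summable (fun j => (w j) ^ 2 * ‖Λ j (proj (W j) f)‖ ^ 2) ∧
      ∑' j, (w j) ^ 2 * ‖Λ j (proj (W j) f)‖ ^ 2 ≤ D₁ * ‖f‖ ^ 2)
    (hΓ : ∀ f : E, Summable (fun j => (v j) ^ 2 * ‖Γ j (proj (V' j) f)‖ ^ 2) ∧
      ∑' j, (v j) ^ 2 * ‖Γ j (proj (V' j) f)‖ ^ 2 ≤ D₂ * ‖f‖ ^ 2) :
    ∃ S : E →L[ℂ] E,
      (∀ f : E, HasSum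
        (fun j => (v j * w j) • proj (V' j)
          (ContinuousLinearMap.adjoint (Γ j) (Λ j (proj (W j) f)))) (S f)) ∧
      ‖S‖ ≤ Real.sqrt (D₁ * D₂) ∧
      ∃ S' : E →L[ℂ] E,
        (∀ f : E, HasSum
          (fun j => (w j * v j) • proj (W j)
            (ContinuousLinearMap.adjoint (Λ j) (Γ j (proj (V' j) f)))) (S' f)) ∧
        ContinuousLinearMap.adjoint S = S' := by
  set T : ∀ j, E →L[ℂ] G j := fun j => (w j : ℂ) • (Λ j ∘L proj (W j))
  set U : ∀ j, E →L[ℂ] G j := fun j => (v j : ℂ) • (Γ j ∘L proj (V' j))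
  have hT : IsBessel T D₁ := isBessel_ofReal_smul_iff.mpr hΛ
  have hU : IsBessel U D₂ := isBessel_ofReal_smul_iff.mpr hΓ
  obtain ⟨S, hS, hS_norm⟩ := hT.exists_hasSum_adjoint_apply hU
  obtain ⟨S', hS', -⟩ := hU.exists_hasSum_adjoint_apply hT
  refine ⟨S, fun f => ?_, ?_, S', fun f => ?_, adjoint_eq_of_hasSum_adjoint_apply hS hS'⟩
  · simpa only [T, U, adjoint_smul_comp_proj_apply_smul_comp_proj] using hS f
  · rw [mul_comm D₁]
    exact hS_norm.trans (Real.sqrt_mul_sqrt_le_sqrt_mul D₂ D₁)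
  · simpa only [T, U, adjoint_smul_comp_proj_apply_smul_comp_proj] using hS' f

/-- the frame operator S_{ΓΛ} of a pair of g-fusion Bessel sequences is a
well-defined bounded operator with ‖S_{ΓΛ}‖ ≤ √(D₁D₂) and S_{ΓΛ}* = S_{ΛΓ}. -/
theorem stmt9 {ι E : Type*} [NormedAddCommGroup E] [InnerProductSpace ℂ E] [CompleteSpace E]
    {G : ι → Type*} [∀ j, NormedAddCommGroup (G j)] [∀ j, InnerProductSpace ℂ (G j)]
    [∀ j, CompleteSpace (G j)]
    (W V' : ι → Submodule ℂ E) [∀ j, CompleteSpace (W j)] [∀ j, CompleteSpace (V' j)]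
    (w v : ι → ℝ) (hw : ∀ j, 0 < w j) (hv : ∀ j, 0 < v j)
    (Λ Γ : ∀ j, E →L[ℂ] G j)
    (D₁ D₂ : ℝ)
    (hΛ : ∀ f : E, Summable (fun j => (w j) ^ 2 * ‖Λ j (proj (W j) f)‖ ^ 2) ∧
      ∑' j, (w j) ^ 2 * ‖Λ j (proj (W j) f)‖ ^ 2 ≤ D₁ * ‖f‖ ^ 2)
    (hΓ : ∀ f : E, Summable (fun j => (v j) ^ 2 * ‖Γ j (proj (V' j) f)‖ ^ 2) ∧
      ∑' j, (v j) ^ 2 * ‖Γ j (proj (V' j) f)‖ ^ 2 ≤ D₂ * ‖f‖ ^ 2) :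
    ∃ S : E →L[ℂ] E,
      (∀ f : E, HasSum
        (fun j => (v j * w j) • proj (V' j)
          (ContinuousLinearMap.adjoint (Γ j) (Λ j (proj (W j) f)))) (S f)) ∧
      ‖S‖ ≤ Real.sqrt (D₁ * D₂) ∧
      ∃ S' : E →L[ℂ] E,
        (∀ f : E, HasSum
          (fun j => (w j * v j) • proj (W j)
            (ContinuousLinearMap.adjoint (Λ j) (Γ j (proj (V' j) f)))) (S' f)) ∧
        ContinuousLinearMap.adjoint S = S' :=
  stmt9_general W V' w v Λ Γ D₁ D₂ hΛ hΓ
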